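/- Quotient formula for generalized Schur complements: let M be a symmetric positive semidefinite 3×3 block matrix with blocks A, B, C in the first block row, Bᵀ, D, E in the second, and Cᵀ, Eᵀ, F in the third. Then (M /† F) /† (M̄ /† F) = A - B D† Bᵀ - (C - B D† E)(F - Eᵀ D† E)†(Cᵀ - Eᵀ D† Bᵀ), where M̄ = [[D, E], [Eᵀ, F]], and this matrix is positive semidefinite. -/

import Mathlib

open Matrix

/-- The four Moore–Penrose conditions: `Dp` is the Moore–Penrose pseudoinverse of `D`. -/
def IsMP {α : Type*} [Fintype α] [DecidableEq α] (D Dp : Matrix α α ℝ) : Prop :=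
  D * Dp * D = D ∧ Dp * D * Dp = Dp ∧ (D * Dp)ᵀ = D * Dp ∧ (Dp * D)ᵀ = Dp * D

/-! The matrix `M` is a Gram matrix `Hᵀ H`; splitting the columns of `H` as `[X Y Z]` turns every
generalized Schur complement into `Xᵀ (1 - P) X` for an orthogonal projection `P`. Both iterated
complements produce the orthogonal projection onto the column space of `[Y Z]`, once as
`Π_Y + Π_{(1 - Π_Y) Z}` and once as `Π_Z + Π_{(1 - Π_Z) Y}`, and an orthogonal projection is
determined by its range. -/

section MoorePenrose

variable {α : Type*} [Fintype α] [DecidableEq α]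

theorem IsMP.unique {D X Y : Matrix α α ℝ} (hX : IsMP D X) (hY : IsMP D Y) : X = Y := by
  obtain ⟨hX1, hX2, hX3, hX4⟩ := hX
  obtain ⟨hY1, hY2, hY3, hY4⟩ := hY
  have hDX : D * X = D * Y :=
    calc D * X = D * Y * (D * X) := by rw [← Matrix.mul_assoc, hY1]
      _ = (D * X * (D * Y))ᵀ := by rw [transpose_mul, hX3, hY3]
      _ = (D * X * D * Y)ᵀ := by simp only [Matrix.mul_assoc]
      _ = D * Y := by rw [hX1, hY3]
  have hXD : X * D = Y * D :=
    calc X * D = X * D * (Y * D) := by rw [Matrix.mul_assoc X, ← Matrix.mul_assoc D, hY1]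
      _ = (Y * D * (X * D))ᵀ := by rw [transpose_mul, hX4, hY4]
      _ = (Y * (D * X * D))ᵀ := by simp only [Matrix.mul_assoc]
      _ = Y * D := by rw [hX1, hY4]
  calc X = X * D * X := hX2.symm
    _ = Y * (D * Y) := by rw [hXD, Matrix.mul_assoc, hDX]
    _ = Y := by rw [← Matrix.mul_assoc, hY2]

theorem IsMP.isSymm {D X : Matrix α α ℝ} (hD : D.IsSymm) (h : IsMP D X) : X.IsSymm := by
  obtain ⟨h1, h2, h3, h4⟩ := h
  refine IsMP.unique ⟨?_, ?_, ?_, ?_⟩ ⟨h1, h2, h3, h4⟩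
  · simpa only [transpose_mul, hD.eq, Matrix.mul_assoc] using congrArg transpose h1
  · simpa only [transpose_mul, hD.eq, Matrix.mul_assoc] using congrArg transpose h2
  · rw [transpose_mul, transpose_transpose, hD.eq, ← h4, transpose_mul, hD.eq]
  · rw [transpose_mul, transpose_transpose, hD.eq, ← h3, transpose_mul, hD.eq]

theorem IsMP.isSymm_of_transpose_mul_self {ι : Type*} [Fintype ι] {K : Matrix ι α ℝ}
    {Kp : Matrix α α ℝ} (h : IsMP (Kᵀ * K) Kp) : Kp.IsSymm :=
  h.isSymm (by rw [IsSymm, transpose_mul, transpose_transpose])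

end MoorePenrose

section Projection

variable {ι κ : Type*} [Fintype ι] [Fintype κ]

theorem Matrix.mul_eq_mul_of_transpose_mul_self_mul_eq {β δ : Type*} [Fintype β]
    {Y : Matrix ι β ℝ} {V W : Matrix β δ ℝ} (h : Yᵀ * Y * V = Yᵀ * Y * W) : Y * V = Y * W := by
  have hgram : (Y * (V - W))ᴴ * (Y * (V - W)) = 0 := by
    rw [conjTranspose_eq_transpose_of_trivial, transpose_mul, Matrix.mul_assoc,
      ← Matrix.mul_assoc Yᵀ, Matrix.mul_sub, h, sub_self, Matrix.mul_zero]
  rw [← sub_eq_zero, ← Matrix.mul_sub]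
  exact conjTranspose_mul_self_eq_zero.mp hgram

def IsOrthProjOnto (P : Matrix ι ι ℝ) (K : Matrix ι κ ℝ) : Prop :=
  P.IsSymm ∧ P * K = K ∧ ∃ W : Matrix κ ι ℝ, P = K * W

theorem isOrthProjOnto_of_isMP [DecidableEq κ] {K : Matrix ι κ ℝ} {Kp : Matrix κ κ ℝ}
    (h : IsMP (Kᵀ * K) Kp) : IsOrthProjOnto (K * Kp * Kᵀ) K := by
  refine ⟨?_, ?_, Kp * Kᵀ, Matrix.mul_assoc _ _ _⟩
  · rw [IsSymm, transpose_mul, transpose_mul, transpose_transpose,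
      h.isSymm_of_transpose_mul_self.eq, Matrix.mul_assoc]
  · have hKK : K * (Kp * (Kᵀ * K)) = K * (1 : Matrix κ κ ℝ) :=
      mul_eq_mul_of_transpose_mul_self_mul_eq (by rw [← Matrix.mul_assoc, h.1, Matrix.mul_one])
    rwa [Matrix.mul_one, ← Matrix.mul_assoc, ← Matrix.mul_assoc] at hKK

namespace IsOrthProjOnto

variable {P Q : Matrix ι ι ℝ} {K : Matrix ι κ ℝ}

theorem mul_self (hP : IsOrthProjOnto P K) : P * P = P := by
  obtain ⟨-, hPK, W, rfl⟩ := hP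
  rw [← Matrix.mul_assoc, hPK]

theorem transpose_mul_self_sub_mul {γ : Type*} (hP : IsOrthProjOnto P K) (X : Matrix ι γ ℝ) :
    Xᵀ * X - Xᵀ * P * X = (X - P * X)ᵀ * (X - P * X) := by
  have hPPX : P * (P * X) = P * X := by rw [← Matrix.mul_assoc, hP.mul_self]
  simp only [transpose_sub, transpose_mul, Matrix.sub_mul, Matrix.mul_sub, Matrix.mul_assoc,
    hP.1.eq, hPPX]
  abel

theorem unique (hP : IsOrthProjOnto P K) (hQ : IsOrthProjOnto Q K) : P = Q := by
  obtain ⟨hPs, hPK, W, hPW⟩ := hP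
  obtain ⟨hQs, hQK, V, hQV⟩ := hQ
  calc P = Q * P := by rw [hPW, ← Matrix.mul_assoc, hQK]
    _ = (P * Q)ᵀ := by rw [transpose_mul, hPs.eq, hQs.eq]
    _ = Q := by rw [hQV, ← Matrix.mul_assoc, hPK, ← hQV, hQs.eq]

theorem mul_eq_zero {γ : Type*} {Y : Matrix ι γ ℝ} (hP : IsOrthProjOnto P K) (h : Kᵀ * Y = 0) :
    P * Y = 0 := by
  obtain ⟨hPs, -, W, hPW⟩ := hP
  rw [← hPs.eq, hPW, transpose_mul, Matrix.mul_assoc, h, Matrix.mul_zero]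

variable {β γ : Type*} [Fintype β] [Fintype γ]

theorem fromCols_comm {Y : Matrix ι β ℝ} {Z : Matrix ι γ ℝ}
    (hP : IsOrthProjOnto P (fromCols Y Z)) : IsOrthProjOnto P (fromCols Z Y) := by
  obtain ⟨hPs, hPK, W, hPW⟩ := hP
  rw [mul_fromCols, fromCols_ext_iff] at hPK
  refine ⟨hPs, by rw [mul_fromCols, hPK.1, hPK.2], fromRows W.toRows₂ W.toRows₁, ?_⟩
  rw [hPW, ← fromRows_toRows W, fromCols_mul_fromRows, fromCols_mul_fromRows, add_comm]
  rfl

theorem add_residual {Y : Matrix ι β ℝ} {Z : Matrix ι γ ℝ} (hP : IsOrthProjOnto P Y)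
    (hQ : IsOrthProjOnto Q (Z - P * Z)) : IsOrthProjOnto (P + Q) (fromCols Y Z) := by
  obtain ⟨hPs, hPY, W, hPW⟩ := hP
  have hQY : Q * Y = 0 := hQ.mul_eq_zero <| by
    rw [transpose_sub, transpose_mul, hPs.eq, Matrix.sub_mul, Matrix.mul_assoc, hPY, sub_self]
  have hQPZ : Q * (P * Z) = 0 := by
    rw [hPW, Matrix.mul_assoc, ← Matrix.mul_assoc Q, hQY, Matrix.zero_mul]
  obtain ⟨hQs, hQJ, V, hQV⟩ := hQ
  refine ⟨hPs.add hQs, ?_, fromRows (W - W * Z * V) V, ?_⟩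
  · rw [mul_fromCols, Matrix.add_mul, Matrix.add_mul, hPY, hQY, add_zero]
    congr 1
    rw [Matrix.mul_sub, hQPZ, sub_zero] at hQJ
    rw [hQJ, add_sub_cancel]
  · rw [fromCols_mul_fromRows, hQV, hPW, Matrix.sub_mul, Matrix.mul_sub]
    simp only [Matrix.mul_assoc]
    abel

end IsOrthProjOnto

end Projection

section Gram

variable {α β γ : Type*} [Fintype β] [Fintype γ]

theorem exists_gram_of_posSemidef_fromBlocks [Fintype α] {A : Matrix α α ℝ} {B : Matrix α β ℝ}
    {C : Matrix α γ ℝ} {D : Matrix β β ℝ} {E : Matrix β γ ℝ} {F : Matrix γ γ ℝ}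
    (hM : (fromBlocks A (fromCols B C) (fromRows Bᵀ Cᵀ) (fromBlocks D E Eᵀ F)).PosSemidef) :
    ∃ (X : Matrix (α ⊕ β ⊕ γ) α ℝ) (Y : Matrix (α ⊕ β ⊕ γ) β ℝ) (Z : Matrix (α ⊕ β ⊕ γ) γ ℝ),
      A = Xᵀ * X ∧ B = Xᵀ * Y ∧ C = Xᵀ * Z ∧ D = Yᵀ * Y ∧ E = Yᵀ * Z ∧ F = Zᵀ * Z := by
  classical
  open scoped MatrixOrder in
  obtain ⟨H, hH⟩ := CStarAlgebra.nonneg_iff_eq_star_mul_self.mp hM.nonneg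
  rw [star_eq_conjTranspose, conjTranspose_eq_transpose_of_trivial,
    ← fromCols_toCols H, ← fromCols_toCols H.toCols₂] at hH
  rw [transpose_fromCols, fromRows_mul_fromCols, transpose_fromCols, fromRows_mul_fromCols,
    fromRows_mul, mul_fromCols, fromBlocks_inj, fromBlocks_inj, fromCols_ext_iff] at hH
  exact ⟨_, _, _, hH.1, hH.2.1.1, hH.2.1.2, hH.2.2.2.1, hH.2.2.2.2.1, hH.2.2.2.2.2.2⟩

/-- The left-hand side is `(M /† D) /† (M̄ /† D)` for `M = [X Y Z]ᵀ [X Y Z]`. -/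
theorem exists_isOrthProjOnto_schur_schur_eq {ι : Type*} [Fintype ι] [DecidableEq β]
    [DecidableEq γ] {X : Matrix ι α ℝ} {Y : Matrix ι β ℝ}
    {Z : Matrix ι γ ℝ} {A : Matrix α α ℝ} {B : Matrix α β ℝ} {C : Matrix α γ ℝ}
    {D Dp : Matrix β β ℝ} {E : Matrix β γ ℝ} {F Sp : Matrix γ γ ℝ}
    (hA : A = Xᵀ * X) (hB : B = Xᵀ * Y) (hC : C = Xᵀ * Z) (hD : D = Yᵀ * Y) (hE : E = Yᵀ * Z)
    (hF : F = Zᵀ * Z) (hDp : IsMP D Dp) (hSp : IsMP (F - Eᵀ * Dp * E) Sp) :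
    ∃ P, IsOrthProjOnto P (fromCols Y Z) ∧
      A - B * Dp * Bᵀ - (C - B * Dp * E) * Sp * (Cᵀ - Eᵀ * Dp * Bᵀ) = Xᵀ * X - Xᵀ * P * X := by
  subst hA hB hC hD hE hF
  have hP := isOrthProjOnto_of_isMP hDp
  set P := Y * Dp * Yᵀ
  set J := Z - P * Z
  have hJJ : Jᵀ * J = Zᵀ * Z - (Yᵀ * Z)ᵀ * Dp * (Yᵀ * Z) := by
    rw [← hP.transpose_mul_self_sub_mul]
    simp only [P, transpose_mul, transpose_transpose, Matrix.mul_assoc]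
  have hQ : IsOrthProjOnto (J * Sp * Jᵀ) J := isOrthProjOnto_of_isMP (by rwa [hJJ])
  have hXJ : Xᵀ * J = Xᵀ * Z - Xᵀ * Y * Dp * (Yᵀ * Z) := by
    simp only [J, P, Matrix.mul_sub, Matrix.mul_assoc]
  have hJX : Jᵀ * X = (Xᵀ * Z)ᵀ - (Yᵀ * Z)ᵀ * Dp * (Xᵀ * Y)ᵀ := by
    rw [← transpose_transpose (Jᵀ * X), transpose_mul, transpose_transpose, hXJ]
    simp only [transpose_sub, transpose_mul, transpose_transpose,
      hDp.isSymm_of_transpose_mul_self.eq, Matrix.mul_assoc]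
  refine ⟨P + J * Sp * Jᵀ, hP.add_residual hQ, ?_⟩
  have hXPX : Xᵀ * P * X = Xᵀ * Y * Dp * (Xᵀ * Y)ᵀ := by
    simp only [P, transpose_mul, transpose_transpose, Matrix.mul_assoc]
  have hXQX : Xᵀ * (J * Sp * Jᵀ) * X = Xᵀ * J * Sp * (Jᵀ * X) := by
    simp only [Matrix.mul_assoc]
  rw [Matrix.mul_add, Matrix.add_mul, hXPX, hXQX, hXJ, hJX, sub_add_eq_sub_sub]

end Gram

theorem quotient_formula_gsc {n m p : ℕ}
    (A : Matrix (Fin n) (Fin n) ℝ) (B : Matrix (Fin n) (Fin m) ℝ)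
    (C : Matrix (Fin n) (Fin p) ℝ) (D : Matrix (Fin m) (Fin m) ℝ)
    (E : Matrix (Fin m) (Fin p) ℝ) (F : Matrix (Fin p) (Fin p) ℝ)
    (Dp : Matrix (Fin m) (Fin m) ℝ) (Fp : Matrix (Fin p) (Fin p) ℝ)
    (Sp : Matrix (Fin p) (Fin p) ℝ) (Tp : Matrix (Fin m) (Fin m) ℝ)
    (hM : (Matrix.fromBlocks A (Matrix.fromCols B C) (Matrix.fromRows Bᵀ Cᵀ)
            (Matrix.fromBlocks D E Eᵀ F)).PosSemidef)
    (hDp : IsMP D Dp) (hFp : IsMP F Fp)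
    (hSp : IsMP (F - Eᵀ * Dp * E) Sp)
    (hTp : IsMP (D - E * Fp * Eᵀ) Tp) :
    (A - C * Fp * Cᵀ) - (B - C * Fp * Eᵀ) * Tp * (Bᵀ - E * Fp * Cᵀ) =
      A - B * Dp * Bᵀ - (C - B * Dp * E) * Sp * (Cᵀ - Eᵀ * Dp * Bᵀ) ∧
    (A - B * Dp * Bᵀ - (C - B * Dp * E) * Sp * (Cᵀ - Eᵀ * Dp * Bᵀ)).PosSemidef := by
  obtain ⟨X, Y, Z, hA, hB, hC, hD, hE, hF⟩ := exists_gram_of_posSemidef_fromBlocks hM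
  obtain ⟨P, hP, hDF⟩ := exists_isOrthProjOnto_schur_schur_eq hA hB hC hD hE hF hDp hSp
  have hE' : Eᵀ = Zᵀ * Y := by rw [hE, transpose_mul, transpose_transpose]
  obtain ⟨P', hP', hFD⟩ := exists_isOrthProjOnto_schur_schur_eq hA hC hB hF hE' hD hFp
    (by rwa [transpose_transpose])
  rw [transpose_transpose] at hFD
  have hPP' : P = P' := hP.unique hP'.fromCols_comm
  refine ⟨by rw [hFD, hDF, hPP'], ?_⟩
  rw [hDF, hP.transpose_mul_self_sub_mul, ← conjTranspose_eq_transpose_of_trivial]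
  exact posSemidef_conjTranspose_mul_self _
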